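/- arXiv:2503.22702 — 4 statements merged into one kernel-verified Lean document; each statement's English description precedes it below -/
import Mathlib

section
/- For all natural numbers r ≤ n and real numbers x and 0 < q < 1, the q-Bernstein polynomial admits the expansion B_{r,n}(x, q) = Σ_{m=0}^{n} C(n, m) · S(n-m, r) · B_m^{(r)}(1 - [x]_{q^{-1}}) · ([x]_q)^r, where S denotes Stirling numbers of the second kind and B_m^{(r)} the Bernoulli polynomial of order r. -/
/-!
With `y = [1-x]_q = 1 - [x]_{q⁻¹}`, the claim is `C(n,r) y^(n-r) = Σ C(n,m) S(n-m,r) B_m^{(r)}(y)`.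
Multiplying the Stirling egf `(e^v-1)^r/r!` by the Bernoulli egf `(v/(e^v-1))^r e^{yv}` gives
`v^r e^{yv}/r!`, whose `n`-th coefficient is `C(n,r) y^(n-r)/n!`; the `n`-th coefficient of the
product of two egfs is the binomial convolution of their sequences divided by `n!`.
-/

open PowerSeries

/-- The `q`-analog `[t]_q = (q^t - 1)/(q - 1)`, where `q ^ t` is the real power. -/
noncomputable def qnum (q t : ℝ) : ℝ := (q ^ t - 1) / (q - 1)

/-- The `q`-Bernstein polynomial `B_{r,n}(x,q) = C(n,r) ([x]_q)^r ([1-x]_q)^{n-r}`. -/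
noncomputable def qBernstein (r n : ℕ) (x q : ℝ) : ℝ :=
  (n.choose r : ℝ) * (qnum q x) ^ r * (qnum q (1 - x)) ^ (n - r)

open Finset Nat

namespace PowerSeries

variable {K : Type*} [Field K] [CharZero K]

theorem coeff_mk_div_factorial_mul_mk_div_factorial (f g : ℕ → K) (n : ℕ) :
    coeff n ((mk fun k => f k / k !) * mk fun k => g k / k !) =
      (∑ m ∈ range (n + 1), (n.choose m : K) * f m * g (n - m)) / n ! := by
  rw [coeff_mul, sum_antidiagonal_eq_sum_range_succ (fun i j => coeff i (mk fun k => f k / k !) *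
    coeff j (mk fun k => g k / k !)), sum_div]
  refine sum_congr rfl fun m hm => ?_
  have hmn : m ≤ n := Nat.lt_succ_iff.mp (mem_range.mp hm)
  simp only [coeff_mk]
  have hn : (n ! : K) ≠ 0 := Nat.cast_ne_zero.mpr n.factorial_ne_zero
  rw [Nat.cast_choose K hmn]
  field_simp

theorem coeff_X_pow_mul_rescale_exp {r n : ℕ} (hrn : r ≤ n) (y : K) :
    coeff n (X ^ r * rescale y (exp K)) = y ^ (n - r) / (n - r)! := by
  obtain ⟨d, rfl⟩ := Nat.exists_eq_add_of_le hrn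
  rw [add_comm r d, coeff_X_pow_mul, coeff_rescale, coeff_exp, Nat.add_sub_cancel]
  simp [div_eq_mul_inv]

end PowerSeries

theorem choose_mul_pow_eq_sum_stirling_mul_bernoulli {K : Type*} [Field K] [CharZero K]
    {r n : ℕ} (hrn : r ≤ n) (y : K) (s b : ℕ → K)
    (hs : (mk fun k => s k / k !) = (r ! : K)⁻¹ • (exp K - 1) ^ r)
    (hb : (exp K - 1) ^ r * (mk fun k => b k / k !) = X ^ r * rescale y (exp K)) :
    (n.choose r : K) * y ^ (n - r) =
      ∑ m ∈ range (n + 1), (n.choose m : K) * s (n - m) * b m := by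
  have hegf : (mk fun k => b k / k !) * (mk fun k => s k / k !) =
      (r ! : K)⁻¹ • (X ^ r * rescale y (exp K)) := by
    rw [hs, mul_smul_comm, mul_comm, hb]
  have hcoeff := congrArg (coeff n) hegf
  rw [coeff_mk_div_factorial_mul_mk_div_factorial, map_smul, coeff_X_pow_mul_rescale_exp hrn,
    div_eq_iff (Nat.cast_ne_zero.mpr n.factorial_ne_zero)] at hcoeff
  rw [Nat.cast_choose K hrn]
  simp only [mul_right_comm _ (s _)]
  rw [hcoeff, smul_eq_mul]
  field_simp

theorem qnum_one_sub {q : ℝ} (hq0 : 0 < q) (hq1 : q ≠ 1) (x : ℝ) :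
    qnum q (1 - x) = 1 - qnum q⁻¹ x := by
  have hsub : q - 1 ≠ 0 := sub_ne_zero.mpr hq1
  rw [qnum, qnum, Real.rpow_sub hq0, Real.rpow_one, Real.inv_rpow hq0.le]
  field_simp
  ring

/-- Theorem 2.1 (case `Y = 1`): expansion of the `q`-Bernstein polynomials through the
Stirling numbers of the second kind `S` (egf `(e^v-1)^m/m!`) and the higher-order
Bernoulli polynomials `B k ρ y = B_k^{(ρ)}(y)` (egf `(v/(e^v-1))^ρ e^{yv}`). -/
theorem stmt_8 (q x : ℝ) (hq0 : 0 < q) (hq1 : q < 1) (r n : ℕ) (hrn : r ≤ n)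
    (S : ℕ → ℕ → ℝ)
    (hS : ∀ m : ℕ, PowerSeries.mk (fun k => S k m / (k.factorial : ℝ)) =
      ((m.factorial : ℝ)⁻¹) • (PowerSeries.exp ℝ - 1) ^ m)
    (B : ℕ → ℕ → ℝ → ℝ)
    (hB : ∀ (ρ : ℕ) (y : ℝ),
      (PowerSeries.exp ℝ - 1) ^ ρ * PowerSeries.mk (fun k => B k ρ y / (k.factorial : ℝ)) =
        PowerSeries.X ^ ρ * PowerSeries.rescale y (PowerSeries.exp ℝ)) :
    qBernstein r n x q =
      ∑ m ∈ Finset.range (n + 1),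
        (n.choose m : ℝ) * S (n - m) r * B m r (1 - qnum q⁻¹ x) * (qnum q x) ^ r := by
  rw [← qnum_one_sub hq0 hq1.ne, ← Finset.sum_mul,
    ← choose_mul_pow_eq_sum_stirling_mul_bernoulli hrn _ _ _ (hS r) (hB r _), qBernstein]
  ring
end

section
/- The Bell polynomial satisfies φ_k(y) = Σ_{m=0}^{k} y^m · S(k, m), where S(k, m) are the Stirling numbers of the second kind. Consequently, for Y ~ Poisson(α), the probabilistic q-Bernstein polynomials satisfy B_{r,n}^Y(x, q) = Σ_{m=0}^{n-r} C(n, r) · α^m · ([x]_q)^r · (1 - [x]_{q^{-1}})^m · S(n-r, m). -/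
/-!
`Φ y` and `exp ∘ (y • (exp - 1))` both solve `F' = y eᵛ F` with `F(0) = 1`, and such a linear
equation has only one formal solution, its coefficients being determined recursively. Expanding
the composite, the `k`-th coefficient is `∑ₘ yᵐ / m! · [vᵏ](eᵛ - 1)ᵐ = ∑ₘ yᵐ S(k,m) / k!`, the
sum stopping at `m = k` since `(eᵛ - 1)ᵐ` has order `m`. The Bernstein expansion is `n! / r!`
times the `(n - r)`-th coefficient of `Φ`.
-/

open PowerSeries

namespace PowerSeries

variable {R : Type*} [CommRing R]

theorem eq_of_derivative_eq_mul_self [IsAddTorsionFree R] {a f g : R⟦X⟧}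
    (hf : d⁄dX R f = a * f) (hg : d⁄dX R g = a * g) (hc : constantCoeff f = constantCoeff g) :
    f = g := by
  ext n
  induction n using Nat.strong_induction_on with
  | _ n ih =>
    rcases n with _ | n
    · simpa using hc
    have hstep : coeff (n + 1) f * (n + 1) = coeff (n + 1) g * (n + 1) := by
      rw [← coeff_derivative, ← coeff_derivative, hf, hg, coeff_mul, coeff_mul]
      refine Finset.sum_congr rfl fun p hp => ?_
      rw [ih p.2 (Nat.lt_succ_of_le (Finset.HasAntidiagonal.antidiagonal.snd_le hp))]
    rw [← Nat.cast_succ, mul_comm, ← nsmul_eq_mul, mul_comm, ← nsmul_eq_mul] at hstep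
    exact (smul_right_inj (Nat.succ_ne_zero n)).mp hstep

theorem coeff_subst_eq_sum_range {f g : R⟦X⟧} (hg : constantCoeff g = 0) (n : ℕ) :
    coeff n (f.subst g) = ∑ d ∈ Finset.range (n + 1), coeff d f * coeff n (g ^ d) := by
  rw [coeff_subst' (HasSubst.of_constantCoeff_zero' hg)]
  simp only [smul_eq_mul]
  refine finsum_eq_sum_of_support_subset _ fun d hd => ?_
  rw [Finset.coe_range, Set.mem_Iio, Nat.lt_succ_iff]
  by_contra! hnd
  have hdvd : X ^ d ∣ g ^ d := pow_dvd_pow_of_dvd (X_dvd_iff.mpr hg) d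
  exact hd (mul_eq_zero_of_right _ (X_pow_dvd_iff.mp hdvd n hnd))

theorem derivative_exp_subst [Algebra ℚ R] {g : R⟦X⟧} (hg : constantCoeff g = 0) :
    d⁄dX R ((exp R).subst g) = d⁄dX R g * (exp R).subst g := by
  rw [derivative_subst (HasSubst.of_constantCoeff_zero' hg), derivative_exp, mul_comm]

theorem constantCoeff_exp_subst [Algebra ℚ R] {g : R⟦X⟧} (hg : constantCoeff g = 0) :
    constantCoeff ((exp R).subst g) = 1 := by
  rw [← coeff_zero_eq_constantCoeff_apply, coeff_subst_eq_sum_range hg]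
  simp

theorem eq_exp_subst_of_derivative [Algebra ℚ R] [IsAddTorsionFree R] {a F : R⟦X⟧}
    (ha : constantCoeff a = 0) (h0 : constantCoeff F = 1) (h1 : d⁄dX R F = d⁄dX R a * F) :
    F = (exp R).subst a :=
  eq_of_derivative_eq_mul_self h1 (derivative_exp_subst ha) (by rw [h0, constantCoeff_exp_subst ha])

end PowerSeries

theorem coeff_exp_subst_smul_exp_sub_one (S : ℕ → ℕ → ℝ)
    (hS : ∀ m : ℕ, PowerSeries.mk (fun k => S k m / (k.factorial : ℝ)) =
      ((m.factorial : ℝ)⁻¹) • (PowerSeries.exp ℝ - 1) ^ m) (y : ℝ) (k : ℕ) :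
    coeff k ((exp ℝ).subst (y • (exp ℝ - 1))) =
      (∑ m ∈ Finset.range (k + 1), y ^ m * S k m) / k.factorial := by
  rw [coeff_subst_eq_sum_range (by simp), Finset.sum_div]
  refine Finset.sum_congr rfl fun m _ => ?_
  have hSkm : S k m / k.factorial = (m.factorial : ℝ)⁻¹ * coeff k ((exp ℝ - 1) ^ m) := by
    rw [← smul_eq_mul, ← map_smul, ← hS m, coeff_mk]
  rw [smul_pow, map_smul, smul_eq_mul, mul_div_assoc, hSkm, coeff_exp]
  simp only [one_div, map_inv₀, map_natCast]
  ring

theorem stmt_12_general (α : ℝ) (q x : ℝ)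
    (r n : ℕ) (hrn : r ≤ n)
    (Φ : ℝ → PowerSeries ℝ)
    (hΦ0 : ∀ y : ℝ, PowerSeries.constantCoeff (Φ y) = 1)
    (hΦ1 : ∀ y : ℝ, PowerSeries.derivative ℝ (Φ y) = y • (PowerSeries.exp ℝ * Φ y))
    (φ : ℕ → ℝ → ℝ)
    (hφ : ∀ (k : ℕ) (y : ℝ), φ k y = (k.factorial : ℝ) * PowerSeries.coeff k (Φ y))
    (S : ℕ → ℕ → ℝ)
    (hS : ∀ m : ℕ, PowerSeries.mk (fun k => S k m / (k.factorial : ℝ)) =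
      ((m.factorial : ℝ)⁻¹) • (PowerSeries.exp ℝ - 1) ^ m) :
    (∀ (k : ℕ) (y : ℝ), φ k y = ∑ m ∈ Finset.range (k + 1), y ^ m * S k m) ∧
    (n.factorial : ℝ) * PowerSeries.coeff n
        (((qnum q x) ^ r / (r.factorial : ℝ)) •
          (PowerSeries.X ^ r * Φ (α * (1 - qnum q⁻¹ x)))) =
      ∑ m ∈ Finset.range (n - r + 1),
        (n.choose r : ℝ) * α ^ m * (qnum q x) ^ r * (1 - qnum q⁻¹ x) ^ m * S (n - r) m := by
  have hΦ : ∀ y, Φ y = (exp ℝ).subst (y • (exp ℝ - 1)) := fun y =>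
    eq_exp_subst_of_derivative (by simp) (hΦ0 y) (by
      rw [hΦ1, Derivation.map_smul, map_sub, derivative_exp, derivative_one, sub_zero, smul_mul_assoc])
  have hcoeff : ∀ k y, coeff k (Φ y) = (∑ m ∈ Finset.range (k + 1), y ^ m * S k m) / k.factorial :=
    fun k y => by rw [hΦ, coeff_exp_subst_smul_exp_sub_one S hS]
  refine ⟨fun k y => ?_, ?_⟩
  · rw [hφ, hcoeff, mul_div_cancel₀ _ (by positivity)]
  · rw [map_smul, smul_eq_mul, coeff_X_pow_mul', if_pos hrn, hcoeff, Finset.sum_div,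
      Finset.mul_sum, Finset.mul_sum]
    refine Finset.sum_congr rfl fun m _ => ?_
    rw [Nat.cast_choose ℝ hrn, mul_pow]
    field_simp

/-- Theorem 3.2: the Bell polynomials (`φ k y = k! · coeff k (Φ y)` where
`Φ y = e^{y(e^v-1)}` is characterized by `F(0) = 1`, `F' = y e^v F`) satisfy
`φ_k(y) = Σ_{m=0}^k y^m S(k,m)` where `S` are the Stirling numbers of the second kind
(egf `(e^v-1)^m/m!`); consequently, for `Y ~ Poisson(α)` the probabilistic
`q`-Bernstein polynomials `B_{r,n}^Y(x,q)` (given by `n!` times the `n`-th coefficient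
of `(v[x]_q)^r/r! · e^{α(1-[x]_{q⁻¹})(e^v-1)}`) have the stated expansion. -/
theorem stmt_12 (α : ℝ) (hα : 0 < α) (q x : ℝ) (hq0 : 0 < q) (hq1 : q < 1)
    (r n : ℕ) (hrn : r ≤ n)
    (Φ : ℝ → PowerSeries ℝ)
    (hΦ0 : ∀ y : ℝ, PowerSeries.constantCoeff (Φ y) = 1)
    (hΦ1 : ∀ y : ℝ, PowerSeries.derivative ℝ (Φ y) = y • (PowerSeries.exp ℝ * Φ y))
    (φ : ℕ → ℝ → ℝ)
    (hφ : ∀ (k : ℕ) (y : ℝ), φ k y = (k.factorial : ℝ) * PowerSeries.coeff k (Φ y))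
    (S : ℕ → ℕ → ℝ)
    (hS : ∀ m : ℕ, PowerSeries.mk (fun k => S k m / (k.factorial : ℝ)) =
      ((m.factorial : ℝ)⁻¹) • (PowerSeries.exp ℝ - 1) ^ m) :
    (∀ (k : ℕ) (y : ℝ), φ k y = ∑ m ∈ Finset.range (k + 1), y ^ m * S k m) ∧
    (n.factorial : ℝ) * PowerSeries.coeff n
        (((qnum q x) ^ r / (r.factorial : ℝ)) •
          (PowerSeries.X ^ r * Φ (α * (1 - qnum q⁻¹ x)))) =
      ∑ m ∈ Finset.range (n - r + 1),
        (n.choose r : ℝ) * α ^ m * (qnum q x) ^ r * (1 - qnum q⁻¹ x) ^ m * S (n - r) m :=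
  stmt_12_general α q x r n hrn Φ hΦ0 hΦ1 φ hφ S hS
end

section
/- Let c be a real number and 0 ≤ p ≤ 1. As an identity of formal power series in v, (1 + p(e^v - 1))^c = Σ_{n≥0} (Σ_{m=0}^{n} p^m · (c)_m · S(n, m)) · v^n / n!, where (c)_m = c(c-1)⋯(c-m+1) is the falling factorial and S(n, m) are Stirling numbers of the second kind. Consequently, for a Bernoulli(p) random variable Y, the probabilistic q-Bernstein polynomials satisfy B_{r,n}^Y(x, q) = ([x]_q)^r · C(n, r) · Σ_{m=0}^{n-r} p^m · (1 - [x]_{q^{-1}})_m · S(n-r, m). -/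
open PowerSeries

/-- The falling factorial `(c)_m = c(c-1)⋯(c-m+1)` of a real number. -/
noncomputable def fallFact (c : ℝ) (m : ℕ) : ℝ := ∏ i ∈ Finset.range m, (c - i)

/-- The real power `G^c` of a formal power series `G` (with constant term `1`),
defined via the binomial series `(1+u)^c = Σ_m (c)_m u^m/m!` with `u = G - 1`:
since `(G-1)^m` has order `≥ m`, only finitely many terms contribute to each
coefficient. -/
noncomputable def psRpow (G : PowerSeries ℝ) (c : ℝ) : PowerSeries ℝ :=
  PowerSeries.mk fun n => ∑ m ∈ Finset.range (n + 1),
    (fallFact c m / (m.factorial : ℝ)) * PowerSeries.coeff n ((G - 1) ^ m)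

/-! The binomial series of `1 + p • F` is read off termwise: `(p • F)^m = p^m • F^m`.
With `F = e^v - 1`, the coefficients of `F^m` are `m!/k!` times the Stirling numbers `S k m`,
and the `m!` cancels the one in the binomial coefficient `(c)_m / m!`. -/

theorem coeff_psRpow_one_add_smul (F : ℝ⟦X⟧) (p c : ℝ) (k : ℕ) :
    coeff k (psRpow (1 + p • F) c) =
      ∑ m ∈ Finset.range (k + 1), fallFact c m / m.factorial * p ^ m * coeff k (F ^ m) := by
  simp only [psRpow, coeff_mk, add_sub_cancel_left, smul_pow, coeff_smul, smul_eq_mul, mul_assoc]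

theorem coeff_exp_sub_one_pow {S : ℕ → ℕ → ℝ}
    (hS : ∀ m : ℕ, mk (fun k => S k m / (k.factorial : ℝ)) =
      ((m.factorial : ℝ)⁻¹) • (exp ℝ - 1) ^ m) (k m : ℕ) :
    coeff k ((exp ℝ - 1) ^ m) = m.factorial * S k m / k.factorial := by
  have h := congrArg (coeff k) (hS m)
  rw [coeff_mk, coeff_smul, smul_eq_mul] at h
  rw [mul_div_assoc, h, ← mul_assoc, mul_inv_cancel₀ (by positivity), one_mul]

theorem coeff_psRpow_one_add_smul_exp_sub_one {S : ℕ → ℕ → ℝ}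
    (hS : ∀ m : ℕ, mk (fun k => S k m / (k.factorial : ℝ)) =
      ((m.factorial : ℝ)⁻¹) • (exp ℝ - 1) ^ m) (p c : ℝ) (k : ℕ) :
    coeff k (psRpow (1 + p • (exp ℝ - 1)) c) =
      (∑ m ∈ Finset.range (k + 1), p ^ m * fallFact c m * S k m) / k.factorial := by
  rw [coeff_psRpow_one_add_smul, Finset.sum_div]
  refine Finset.sum_congr rfl fun m _ => ?_
  rw [coeff_exp_sub_one_pow hS]
  field_simp

theorem coeff_X_pow_mul_of_le (f : ℝ⟦X⟧) {r n : ℕ} (hrn : r ≤ n) :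
    coeff n (X ^ r * f) = coeff (n - r) f := by
  rw [coeff_X_pow_mul', if_pos hrn]

theorem stmt_13_general (p : ℝ) (c : ℝ) (q x : ℝ)
    (r n : ℕ) (hrn : r ≤ n)
    (S : ℕ → ℕ → ℝ)
    (hS : ∀ m : ℕ, PowerSeries.mk (fun k => S k m / (k.factorial : ℝ)) =
      ((m.factorial : ℝ)⁻¹) • (PowerSeries.exp ℝ - 1) ^ m) :
    (∀ k : ℕ, PowerSeries.coeff k (psRpow (1 + p • (PowerSeries.exp ℝ - 1)) c) =
      (∑ m ∈ Finset.range (k + 1), p ^ m * fallFact c m * S k m) / (k.factorial : ℝ)) ∧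
    (n.factorial : ℝ) * PowerSeries.coeff n
        (((qnum q x) ^ r / (r.factorial : ℝ)) •
          (PowerSeries.X ^ r *
            psRpow (1 + p • (PowerSeries.exp ℝ - 1)) (1 - qnum q⁻¹ x))) =
      (qnum q x) ^ r * (n.choose r : ℝ) *
        ∑ m ∈ Finset.range (n - r + 1),
          p ^ m * fallFact (1 - qnum q⁻¹ x) m * S (n - r) m := by
  refine ⟨coeff_psRpow_one_add_smul_exp_sub_one hS p c, ?_⟩
  rw [coeff_smul, smul_eq_mul, coeff_X_pow_mul_of_le _ hrn,
    coeff_psRpow_one_add_smul_exp_sub_one hS, Nat.cast_choose ℝ hrn]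
  field_simp

/-- Theorem 3.3: binomial-series expansion of `(1 + p(e^v-1))^c` through Stirling
numbers of the second kind `S` (egf `(e^v-1)^m/m!`), and the resulting formula for
the probabilistic `q`-Bernstein polynomials attached to `Y ~ Bernoulli(p)` (defined
as `n!` times the `n`-th coefficient of `(v[x]_q)^r/r! · (1-p+pe^v)^{1-[x]_{q⁻¹}}`). -/
theorem stmt_13 (p : ℝ) (hp0 : 0 ≤ p) (hp1 : p ≤ 1) (c : ℝ) (q x : ℝ)
    (hq0 : 0 < q) (hq1 : q < 1) (r n : ℕ) (hrn : r ≤ n)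
    (S : ℕ → ℕ → ℝ)
    (hS : ∀ m : ℕ, PowerSeries.mk (fun k => S k m / (k.factorial : ℝ)) =
      ((m.factorial : ℝ)⁻¹) • (PowerSeries.exp ℝ - 1) ^ m) :
    (∀ k : ℕ, PowerSeries.coeff k (psRpow (1 + p • (PowerSeries.exp ℝ - 1)) c) =
      (∑ m ∈ Finset.range (k + 1), p ^ m * fallFact c m * S k m) / (k.factorial : ℝ)) ∧
    (n.factorial : ℝ) * PowerSeries.coeff n
        (((qnum q x) ^ r / (r.factorial : ℝ)) •
          (PowerSeries.X ^ r *
            psRpow (1 + p • (PowerSeries.exp ℝ - 1)) (1 - qnum q⁻¹ x))) =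
      (qnum q x) ^ r * (n.choose r : ℝ) *
        ∑ m ∈ Finset.range (n - r + 1),
          p ^ m * fallFact (1 - qnum q⁻¹ x) m * S (n - r) m :=
  stmt_13_general p c q x r n hrn S hS
end

section
/- For 0 < q < 1, q ≠ 1, natural numbers 1 ≤ r ≤ n, and real x, the partial derivative of the q-Bernstein polynomial B_{r,n}(x, q) = C(n, r) ([x]_q)^r ([1-x]_q)^{n-r} with respect to x equals n · q^x · (ln q/(q-1)) · B_{r-1,n-1}(x, q) + n · q^{1-x} · (ln q/(1-q)) · B_{r,n-1}(x, q). -/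
/-
The `q`-Bernstein polynomial is `C(n,r) f^r g^(n-r)` with `f = [x]_q` and `g = [1-x]_q`, and the
product rule applies to any such expression: the absorption identities `r C(n,r) = n C(n-1,r-1)`
and `(n-r) C(n,r) = n C(n-1,r)` turn the two terms of the product rule into `n f' B_{r-1,n-1}`
and `n g' B_{r,n-1}`.
Since `[1-x]_q` has derivative `q^(1-x) ln q/(1-q)`, this is the claimed formula.
-/

theorem Nat.mul_sub_one_choose_sub_one (n r : ℕ) (hr : 1 ≤ r) :
    n * (n - 1).choose (r - 1) = r * n.choose r := by
  obtain ⟨s, rfl⟩ : ∃ s, r = s + 1 := ⟨r - 1, by omega⟩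
  cases n with
  | zero => simp
  | succ m => simpa [mul_comm] using Nat.add_one_mul_choose_eq m s

theorem Nat.mul_sub_one_choose (n r : ℕ) :
    n * (n - 1).choose r = (n - r) * n.choose r := by
  cases n with
  | zero => simp
  | succ m => simpa [mul_comm] using Nat.choose_mul_succ_eq m r

theorem HasDerivAt.choose_mul_pow_mul_pow {𝕜 : Type*} [NontriviallyNormedField 𝕜]
    {f g : 𝕜 → 𝕜} {f' g' x : 𝕜} (hf : HasDerivAt f f' x) (hg : HasDerivAt g g' x)
    {r : ℕ} (n : ℕ) (hr : 1 ≤ r) :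
    HasDerivAt (fun t => (n.choose r : 𝕜) * f t ^ r * g t ^ (n - r))
      (n * f' * ((n - 1).choose (r - 1) * f x ^ (r - 1) * g x ^ (n - 1 - (r - 1))) +
        n * g' * ((n - 1).choose r * f x ^ r * g x ^ (n - 1 - r))) x := by
  refine (((hf.fun_pow r).fun_mul (hg.fun_pow (n - r))).const_mul (n.choose r : 𝕜)).congr_deriv
    ?_ |>.congr_of_eventuallyEq (.of_forall fun t => mul_assoc _ _ _)
  have h₁ : (n * (n - 1).choose (r - 1) : 𝕜) = r * n.choose r := by
    rw [← Nat.cast_mul, ← Nat.cast_mul, Nat.mul_sub_one_choose_sub_one n r hr]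
  have h₂ : (n * (n - 1).choose r : 𝕜) = ((n - r : ℕ) : 𝕜) * n.choose r := by
    rw [← Nat.cast_mul, ← Nat.cast_mul, Nat.mul_sub_one_choose]
  rw [show n - 1 - (r - 1) = n - r by omega, show n - 1 - r = n - r - 1 by omega]
  linear_combination -(f' * f x ^ (r - 1) * g x ^ (n - r)) * h₁ -
    (g' * f x ^ r * g x ^ (n - r - 1)) * h₂

theorem hasDerivAt_qnum {q : ℝ} (hq : 0 < q) (x : ℝ) :
    HasDerivAt (qnum q) (q ^ x * (Real.log q / (q - 1))) x := by
  rw [← mul_div_assoc]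
  exact ((Real.hasStrictDerivAt_const_rpow hq x).hasDerivAt.sub_const 1).div_const (q - 1)

theorem hasDerivAt_qnum_one_sub {q : ℝ} (hq : 0 < q) (x : ℝ) :
    HasDerivAt (fun t => qnum q (1 - t)) (q ^ (1 - x) * (Real.log q / (1 - q))) x := by
  have h := (hasDerivAt_qnum hq (1 - x)).comp x ((hasDerivAt_id x).const_sub 1)
  rwa [mul_neg_one, ← mul_neg, ← div_neg, neg_sub] at h

theorem stmt_19_general (q : ℝ) (hq0 : 0 < q) (r n : ℕ) (hr : 1 ≤ r)
    (x : ℝ) :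
    HasDerivAt (fun t : ℝ => qBernstein r n t q)
      ((n : ℝ) * q ^ x * (Real.log q / (q - 1)) * qBernstein (r - 1) (n - 1) x q +
        (n : ℝ) * q ^ (1 - x) * (Real.log q / (1 - q)) * qBernstein r (n - 1) x q)
      x := by
  have h := (hasDerivAt_qnum hq0 x).choose_mul_pow_mul_pow (hasDerivAt_qnum_one_sub hq0 x) n hr
  simpa only [qBernstein, mul_assoc] using h

/-- Theorem 2.7 (case `Y = 1`): the derivative of the `q`-Bernstein polynomial
with respect to `x` is
`n q^x (ln q/(q-1)) B_{r-1,n-1}(x,q) + n q^{1-x} (ln q/(1-q)) B_{r,n-1}(x,q)`. -/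
theorem stmt_19 (q : ℝ) (hq0 : 0 < q) (hq1 : q < 1) (r n : ℕ) (hr : 1 ≤ r) (hrn : r ≤ n)
    (x : ℝ) :
    HasDerivAt (fun t : ℝ => qBernstein r n t q)
      ((n : ℝ) * q ^ x * (Real.log q / (q - 1)) * qBernstein (r - 1) (n - 1) x q +
        (n : ℝ) * q ^ (1 - x) * (Real.log q / (1 - q)) * qBernstein r (n - 1) x q)
      x :=
  stmt_19_general q hq0 r n hr x
end
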